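/- Let $W_1, \dots, W_n \in \mathbb{R}^{n \times n}$ be symmetric matrices with $\|W_i\| \leq 1$, and for each $i$ define the $(2n+2) \times (2n+2)$ block matrix $A_i$ (block sizes $1,n,n,1$) with $(2,1)$ block $e_i$, $(3,2)$ block $W_i^{\mathsf{T}}$, $(4,3)$ block $e_i^{\mathsf{T}}$, zeros elsewhere. Then $\|A_i\| \leq 1$ for each $i$, and $A_i A_j = A_j A_i$ if and only if $(W_i)_{jk} = (W_j)_{ik}$ for all $k$, which holds whenever the $W_i$ are the (normalized) slices of a single multilinear cubic form. -/
import Mathlib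
open Matrix

noncomputable def opNorm {ι : Type*} [Fintype ι] [DecidableEq ι] (M : Matrix ι ι ℝ) : ℝ :=
  ‖LinearMap.toContinuousLinearMap (Matrix.toEuclideanLin M)‖

def blockA {n : ℕ} (W : Fin n → Matrix (Fin n) (Fin n) ℝ) (i : Fin n) :
    Matrix (Unit ⊕ Fin n ⊕ Fin n ⊕ Unit) (Unit ⊕ Fin n ⊕ Fin n ⊕ Unit) ℝ :=
  Matrix.of fun r s =>
    match r, s with
    | Sum.inr (Sum.inl j), Sum.inl _ => if j = i then 1 else 0
    | Sum.inr (Sum.inr (Sum.inl j)), Sum.inr (Sum.inl k) => (W i)ᵀ j k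
    | Sum.inr (Sum.inr (Sum.inr _)), Sum.inr (Sum.inr (Sum.inl k)) => if k = i then 1 else 0
    | _, _ => 0

lemma sum_sq_mulVec_le {ι : Type*} [Fintype ι] [DecidableEq ι]
    (M : Matrix ι ι ℝ) (h : opNorm M ≤ 1) (u : ι → ℝ) :
    ∑ k, (M.mulVec u k) ^ 2 ≤ ∑ k, (u k) ^ 2 := by
  have hb := (LinearMap.toContinuousLinearMap (Matrix.toEuclideanLin M)).le_opNorm
      ((WithLp.equiv 2 (ι → ℝ)).symm u)
  have hnv : ‖(WithLp.equiv 2 (ι → ℝ)).symm u‖ = Real.sqrt (∑ k, (u k) ^ 2) := by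
    rw [EuclideanSpace.norm_eq]
    simp only [Real.norm_eq_abs, sq_abs]; rfl
  have hMv : ‖LinearMap.toContinuousLinearMap (Matrix.toEuclideanLin M)
      ((WithLp.equiv 2 (ι → ℝ)).symm u)‖ = Real.sqrt (∑ k, (M.mulVec u k) ^ 2) := by
    rw [EuclideanSpace.norm_eq]
    simp only [Real.norm_eq_abs, sq_abs]; rfl
  have h2 : Real.sqrt (∑ k, (M.mulVec u k) ^ 2) ≤ Real.sqrt (∑ k, (u k) ^ 2) := by
    calc Real.sqrt (∑ k, (M.mulVec u k) ^ 2) ≤ opNorm M * Real.sqrt (∑ k, (u k) ^ 2) := by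
          rw [← hMv, ← hnv]; exact hb
      _ ≤ 1 * Real.sqrt (∑ k, (u k) ^ 2) := by
          apply mul_le_mul_of_nonneg_right h (Real.sqrt_nonneg _)
      _ = _ := one_mul _
  calc ∑ k, (M.mulVec u k) ^ 2
      = Real.sqrt (∑ k, (M.mulVec u k) ^ 2) ^ 2 := (Real.sq_sqrt (by positivity)).symm
    _ ≤ Real.sqrt (∑ k, (u k) ^ 2) ^ 2 := by
        apply pow_le_pow_left₀ (Real.sqrt_nonneg _) h2
    _ = ∑ k, (u k) ^ 2 := Real.sq_sqrt (by positivity)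

theorem normA (n : ℕ) (W : Fin n → Matrix (Fin n) (Fin n) ℝ)
    (hsymm : ∀ i, (W i)ᵀ = W i) (hnorm : ∀ i, opNorm (W i) ≤ 1) (i : Fin n) :
    opNorm (blockA W i) ≤ 1 := by
  apply ContinuousLinearMap.opNorm_le_bound _ zero_le_one
  intro x
  rw [one_mul]
  set u : (Unit ⊕ Fin n ⊕ Fin n ⊕ Unit) → ℝ := WithLp.equiv 2 _ x with hu
  have hx : ‖x‖ = Real.sqrt (∑ r, (u r) ^ 2) := by
    rw [EuclideanSpace.norm_eq]; simp only [Real.norm_eq_abs, sq_abs]; rfl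
  have hAx : ‖LinearMap.toContinuousLinearMap (Matrix.toEuclideanLin (blockA W i)) x‖
      = Real.sqrt (∑ r, ((blockA W i).mulVec u r) ^ 2) := by
    rw [EuclideanSpace.norm_eq]; simp only [Real.norm_eq_abs, sq_abs]; rfl
  rw [hx, hAx]
  apply Real.sqrt_le_sqrt
  -- compute mulVec entries
  have hmul : ∀ r, (blockA W i).mulVec u r = match r with
      | Sum.inl _ => 0
      | Sum.inr (Sum.inl j) => if j = i then u (Sum.inl ()) else 0
      | Sum.inr (Sum.inr (Sum.inl k)) => (W i)ᵀ.mulVec (fun l => u (Sum.inr (Sum.inl l))) k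
      | Sum.inr (Sum.inr (Sum.inr _)) => u (Sum.inr (Sum.inr (Sum.inl i))) := by
    intro r
    rcases r with _ | r
    · simp [Matrix.mulVec, blockA, dotProduct, Fintype.sum_sum_type]
    rcases r with j | r
    · simp [Matrix.mulVec, blockA, dotProduct, Fintype.sum_sum_type, ite_mul]
    rcases r with k | _
    · simp [Matrix.mulVec, blockA, dotProduct, Fintype.sum_sum_type]
    · simp [Matrix.mulVec, blockA, dotProduct, Fintype.sum_sum_type, ite_mul]
  simp only [Fintype.sum_sum_type, Fintype.sum_unique, hmul]
  have h1 : ∑ j : Fin n, (if j = i then u (Sum.inl ()) else 0) ^ 2 = u (Sum.inl ()) ^ 2 := by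
    simp [apply_ite (· ^ 2)]
  have h2 : ∑ k : Fin n, ((W i)ᵀ.mulVec (fun l => u (Sum.inr (Sum.inl l))) k) ^ 2
      ≤ ∑ l : Fin n, (u (Sum.inr (Sum.inl l))) ^ 2 := by
    rw [hsymm i]
    exact sum_sq_mulVec_le (W i) (hnorm i) _
  have h3 : (u (Sum.inr (Sum.inr (Sum.inl i)))) ^ 2
      ≤ ∑ k : Fin n, (u (Sum.inr (Sum.inr (Sum.inl k)))) ^ 2 :=
    Finset.single_le_sum (f := fun k => (u (Sum.inr (Sum.inr (Sum.inl k)))) ^ 2)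
      (fun k _ => sq_nonneg _) (Finset.mem_univ i)
  nlinarith [sq_nonneg (u (Sum.inr (Sum.inr (Sum.inr ())))), h1, h2, h3]
lemma mulA {n : ℕ} (W : Fin n → Matrix (Fin n) (Fin n) ℝ) (i j : Fin n) :
    blockA W i * blockA W j = Matrix.of fun r s =>
      match r, s with
      | Sum.inr (Sum.inr (Sum.inl k)), Sum.inl _ => W i j k
      | Sum.inr (Sum.inr (Sum.inr _)), Sum.inr (Sum.inl l) => W j l i
      | _, _ => 0 := by
  ext r s
  rcases r with _ | r; rotate_left; rcases r with r | r; rotate_left; rcases r with r | r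
  all_goals rcases s with _ | s <;>
    [skip; (rcases s with s | s; rotate_left; rcases s with s | s)] <;>
    simp [blockA, Matrix.mul_apply, Fintype.sum_sum_type, transpose_apply]

theorem stmt15 (n : ℕ) (W : Fin n → Matrix (Fin n) (Fin n) ℝ)
    (hsymm : ∀ i, (W i)ᵀ = W i) (hnorm : ∀ i, opNorm (W i) ≤ 1) :
    (∀ i, opNorm (blockA W i) ≤ 1) ∧
    (∀ i j, blockA W i * blockA W j = blockA W j * blockA W i ↔ ∀ k, W i j k = W j i k) ∧
    (∀ (c : Finset (Fin n) → ℝ) (Δ : ℝ),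
      (∀ i, W i = Matrix.of fun j k =>
        if i ≠ j ∧ i ≠ k ∧ j ≠ k then c {i, j, k} / Δ else 0) →
      ∀ i j, blockA W i * blockA W j = blockA W j * blockA W i) := by
  have key : ∀ i j, blockA W i * blockA W j = blockA W j * blockA W i
      ↔ ∀ k, W i j k = W j i k := by
    intro i j
    rw [mulA, mulA]
    constructor
    · intro h k
      exact congrFun (congrFun h (Sum.inr (Sum.inr (Sum.inl k)))) (Sum.inl ())
    · intro h
      ext r s
      rcases r with _ | r; rotate_left; rcases r with r | r; rotate_left; rcases r with r | r
      all_goals rcases s with _ | s <;>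
        [skip; (rcases s with s | s; rotate_left; rcases s with s | s)] <;> simp
      · exact h r
      · -- W j s i = W i s j
        have h1 : W j s i = W j i s := congrFun (congrFun (hsymm j) i) s
        have h2 : W i s j = W i j s := congrFun (congrFun (hsymm i) j) s
        rw [h1, h2, h s]
  refine ⟨normA n W hsymm hnorm, key, ?_⟩
  intro c Δ hc i j
  rw [key]
  intro k
  rw [hc i, hc j]
  simp only [Matrix.of_apply]
  have hset : ({i, j, k} : Finset (Fin n)) = {j, i, k} := by
    ext x; simp [or_comm, or_left_comm, or_assoc]
  by_cases hd : i ≠ j ∧ i ≠ k ∧ j ≠ k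
  · rw [if_pos hd, if_pos ⟨hd.1.symm, hd.2.2, hd.2.1⟩, hset]
  · rw [if_neg hd, if_neg]
    intro ⟨a, b, d⟩
    exact hd ⟨a.symm, d, b⟩
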